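/- Let n ≥ 1 and let x, y : Fin n → ℝ be nonconstant vectors. Then √(2(1 − C(x, y))) = ‖u_x − u_y‖, the Euclidean distance between the standardized vectors u_x and u_y. -/
import Mathlib


/-- Mean of a vector `x : Fin n → ℝ`. -/
noncomputable def mean {n : ℕ} (x : Fin n → ℝ) : ℝ := (∑ i, x i) / n

/-- Sum of squared deviations from the mean. -/
noncomputable def ssq {n : ℕ} (x : Fin n → ℝ) : ℝ := ∑ i, (x i - mean x) ^ 2

/-- Standardized vector `u_x`. -/
noncomputable def stdVec {n : ℕ} (x : Fin n → ℝ) : Fin n → ℝ :=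
  fun i => (x i - mean x) / Real.sqrt (ssq x)

/-- Pearson correlation coefficient. -/
noncomputable def pearson {n : ℕ} (x y : Fin n → ℝ) : ℝ :=
  (∑ i, (x i - mean x) * (y i - mean y)) /
    (Real.sqrt (ssq x) * Real.sqrt (ssq y))

theorem correlation_distance_eq_dist_standardized
    {n : ℕ} (hn : 1 ≤ n) (x y : Fin n → ℝ)
    (hx : 0 < ssq x) (hy : 0 < ssq y) :
    Real.sqrt (2 * (1 - pearson x y)) =
      Real.sqrt (∑ i, (stdVec x i - stdVec y i) ^ 2) := by
  have hsx : (0:ℝ) < Real.sqrt (ssq x) := Real.sqrt_pos.mpr hx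
  have hsy : (0:ℝ) < Real.sqrt (ssq y) := Real.sqrt_pos.mpr hy
  have hsx2 : Real.sqrt (ssq x) ^ 2 = ssq x := Real.sq_sqrt hx.le
  have hsy2 : Real.sqrt (ssq y) ^ 2 = ssq y := Real.sq_sqrt hy.le
  congr 1
  have expand : ∀ i, (stdVec x i - stdVec y i) ^ 2 =
      (x i - mean x) ^ 2 / Real.sqrt (ssq x) ^ 2
      + (y i - mean y) ^ 2 / Real.sqrt (ssq y) ^ 2
      - 2 * ((x i - mean x) * (y i - mean y)
          / (Real.sqrt (ssq x) * Real.sqrt (ssq y))) := by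
    intro i
    simp only [stdVec]
    ring
  rw [Finset.sum_congr rfl fun i _ => expand i]
  rw [Finset.sum_sub_distrib, Finset.sum_add_distrib, ← Finset.sum_div,
    ← Finset.sum_div, ← Finset.mul_sum, ← Finset.sum_div]
  rw [hsx2, hsy2]
  simp only [ssq] at *
  rw [div_self hx.ne', div_self hy.ne']
  simp only [pearson, ssq]
  ring
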